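/- Let Q be the (1+G₁+...+G_K)×(1+G₁+...+G_K) symmetric matrix with Q₀₀ = δ where δ = Σ_g n_g^{(k)} (same for all k), diagonal blocks Q_{kk} = T_k I + diag(n_g^{(k)}), off-diagonal blocks Q_{kℓ} = N_{kℓ} with row sums n_g^{(k)}, and Q_{0k} the vector (n_g^{(k)})_g. Let Q̃ be its block-diagonal part and Q̄ = Q̃^{-1/2} Q Q̃^{-1/2}. With v₀ = δ^{1/2} e₀ and v_k having entries (T_k + n_g^{(k)})^{1/2} on block k and 0 elsewhere, one has v₀ᵀ Q̄ v_k = Σ_g n_g^{(k)}, ‖v₀‖ = δ^{1/2}, and ‖v_k‖ = (G_k T_k + Σ_g n_g^{(k)})^{1/2}; consequently λ_min(Q̄) ≤ 1 − max_k (δ/(G_k T_k + δ))^{1/2}. -/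

import Mathlib

open Matrix

/-!
The scaled vectors `D⁻¹ e₀` and `D⁻¹ 1_k` (with `D = Q̃^{-1/2}`) are exactly `v₀` and `v_k`, so
their Rayleigh data for `Q̄` reduce to the entry `Q₀₀ = δ`, the row sum `Σ_g Q_{0,(k,g)} = δ` and
the block sum `Σ_g (T_k + n_g^{(k)})`. Since `v₀ ⊥ v_k` and each has Rayleigh quotient `1`, the
combination `‖v_k‖ v₀ - ‖v₀‖ v_k` has Rayleigh quotient `1 - δ / (‖v₀‖ ‖v_k‖)`, which bounds
`λ_min(Q̄)` from above.
-/

section Blocks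

variable {ι₀ α : Type*} {β : α → Type*} [Fintype ι₀] [Fintype α] [∀ a, Fintype (β a)]

theorem sum_eq_sum_block_of_vanishing {M : Type*} [AddCommMonoid M] (f : ι₀ ⊕ (Σ a, β a) → M)
    (k : α) (h_inl : ∀ i, f (.inl i) = 0) (h_inr : ∀ l ≠ k, ∀ b, f (.inr ⟨l, b⟩) = 0) :
    ∑ i, f i = ∑ b, f (.inr ⟨k, b⟩) := by
  rw [Fintype.sum_sum_type, Fintype.sum_sigma, Finset.sum_eq_single k
    (fun l _ hl => Finset.sum_eq_zero fun b _ => h_inr l hl b) (by simp)]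
  simp [h_inl]

def blockIndicator {R : Type*} [Zero R] [One R] [DecidableEq α] (k : α) :
    ι₀ ⊕ (Σ a, β a) → R :=
  Sum.elim 0 fun p => if p.1 = k then 1 else 0

theorem dotProduct_blockIndicator {R : Type*} [NonAssocSemiring R] [DecidableEq α]
    (x : ι₀ ⊕ (Σ a, β a) → R) (k : α) :
    x ⬝ᵥ blockIndicator k = ∑ b, x (.inr ⟨k, b⟩) := by
  rw [dotProduct, sum_eq_sum_block_of_vanishing _ k (by simp [blockIndicator])
    (fun l hl b => by simp [blockIndicator, hl])]
  simp [blockIndicator]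

end Blocks

namespace Matrix

theorem dotProduct_diagonal_mul_mul_diagonal_mulVec {n R : Type*} [Fintype n] [DecidableEq n]
    [CommSemiring R] (d x y : n → R) (Q : Matrix n n R) :
    x ⬝ᵥ (diagonal d * Q * diagonal d) *ᵥ y = (d * x) ⬝ᵥ Q *ᵥ (d * y) := by
  rw [← mulVec_mulVec, ← mulVec_mulVec, dotProduct_mulVec, mul_comm d x]
  congr 2 <;> ext i <;> simp [vecMul_diagonal, mulVec_diagonal]

variable {n : Type*} [Fintype n] [DecidableEq n] {A : Matrix n n ℝ}

theorem IsHermitian.posSemidef_sub_sInf_spectrum (hA : A.IsHermitian) :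
    (A - algebraMap ℝ _ (sInf (spectrum ℝ A))).PosSemidef := by
  set m := sInf (spectrum ℝ A)
  have hB : (A - algebraMap ℝ _ m).IsHermitian :=
    hA.sub (by simp [algebraMap_eq_diagonal])
  refine hB.posSemidef_iff_eigenvalues_nonneg.mpr fun i => ?_
  obtain ⟨a, ha, b, rfl, hab⟩ :=
    spectrum.sub_singleton_eq A m ▸ hB.eigenvalues_mem_spectrum_real i
  rw [← hab]
  exact sub_nonneg.mpr <| csInf_le (finite_spectrum A).bddBelow ha

theorem IsHermitian.sInf_spectrum_mul_dotProduct_self_le (hA : A.IsHermitian) (x : n → ℝ) :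
    sInf (spectrum ℝ A) * (x ⬝ᵥ x) ≤ x ⬝ᵥ A *ᵥ x := by
  have := hA.posSemidef_sub_sInf_spectrum.dotProduct_mulVec_nonneg x
  simpa [sub_mulVec, Algebra.algebraMap_eq_smul_one, smul_mulVec, dotProduct_smul] using this

theorem IsHermitian.sInf_spectrum_le_one_sub_div {x y : n → ℝ} {a b c : ℝ} (hA : A.IsHermitian)
    (ha : 0 < a) (hb : 0 < b) (hxx : x ⬝ᵥ x = a) (hxAx : x ⬝ᵥ A *ᵥ x = a)
    (hyy : y ⬝ᵥ y = b) (hyAy : y ⬝ᵥ A *ᵥ y = b) (hxy : x ⬝ᵥ y = 0)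
    (hxAy : x ⬝ᵥ A *ᵥ y = c) :
    sInf (spectrum ℝ A) ≤ 1 - c / (√a * √b) := by
  have hyAx : y ⬝ᵥ A *ᵥ x = c := by
    rw [← hxAy, dotProduct_comm, dotProduct_mulVec, ← mulVec_transpose,
      ← conjTranspose_eq_transpose_of_trivial, hA.eq]
  have hyx : y ⬝ᵥ x = 0 := by rw [dotProduct_comm, hxy]
  have hs : 0 < √a * √b := by positivity
  have hs2 : (√a * √b) ^ 2 = a * b := by rw [mul_pow, Real.sq_sqrt ha.le, Real.sq_sqrt hb.le]
  -- the test vector `√b x - √a y` has Rayleigh quotient `1 - c / √(ab)`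
  have key := hA.sInf_spectrum_mul_dotProduct_self_le (√b • x - √a • y)
  have hww : (√b • x - √a • y) ⬝ᵥ (√b • x - √a • y) = 2 * (√a * √b) ^ 2 := by
    simp only [sub_dotProduct, dotProduct_sub, smul_dotProduct, dotProduct_smul, smul_eq_mul,
      hxx, hyy, hxy, hyx]
    linear_combination a * Real.sq_sqrt hb.le + b * Real.sq_sqrt ha.le - 2 * hs2
  have hwAw : (√b • x - √a • y) ⬝ᵥ A *ᵥ (√b • x - √a • y)
      = 2 * (√a * √b) ^ 2 - 2 * (√a * √b) * c := by
    simp only [mulVec_sub, mulVec_smul, sub_dotProduct, dotProduct_sub, smul_dotProduct,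
      dotProduct_smul, smul_eq_mul, hxAx, hyAy, hxAy, hyAx]
    linear_combination a * Real.sq_sqrt hb.le + b * Real.sq_sqrt ha.le - 2 * hs2
  rw [hww, hwAw] at key
  have hms : sInf (spectrum ℝ A) * (√a * √b) ≤ √a * √b - c :=
    le_of_mul_le_mul_right (by linear_combination key) (by positivity : 0 < 2 * (√a * √b))
  rw [show 1 - c / (√a * √b) = (√a * √b - c) / (√a * √b) by field_simp]
  exact (le_div_iff₀ hs).mpr hms

end Matrix

theorem stmt15 {K : ℕ} {G : Fin K → ℕ}
    (T : Fin K → ℝ) (hT : ∀ k, 0 < T k)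
    (ng : (k : Fin K) → Fin (G k) → ℝ) (hng : ∀ k g, 0 ≤ ng k g)
    (δ : ℝ) (hδ : 0 < δ) (hsumg : ∀ k, ∑ g, ng k g = δ)
    (Q : Matrix (Unit ⊕ ((k : Fin K) × Fin (G k))) (Unit ⊕ ((k : Fin K) × Fin (G k))) ℝ)
    (hsym : Q.IsSymm)
    (hQ00 : Q (Sum.inl ()) (Sum.inl ()) = δ)
    (hQ0 : ∀ (k : Fin K) (g : Fin (G k)), Q (Sum.inl ()) (Sum.inr ⟨k, g⟩) = ng k g)
    (hQdiag : ∀ (k : Fin K) (g g' : Fin (G k)),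
      Q (Sum.inr ⟨k, g⟩) (Sum.inr ⟨k, g'⟩) = if g = g' then T k + ng k g else 0)
    (dv : Unit ⊕ ((k : Fin K) × Fin (G k)) → ℝ)
    (hdv0 : dv (Sum.inl ()) = (Real.sqrt δ)⁻¹)
    (hdv : ∀ (k : Fin K) (g : Fin (G k)), dv (Sum.inr ⟨k, g⟩) = (Real.sqrt (T k + ng k g))⁻¹)
    (Qbar : Matrix (Unit ⊕ ((k : Fin K) × Fin (G k))) (Unit ⊕ ((k : Fin K) × Fin (G k))) ℝ)
    (hQbar : Qbar = Matrix.diagonal dv * Q * Matrix.diagonal dv)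
    (v₀ : Unit ⊕ ((k : Fin K) × Fin (G k)) → ℝ)
    (hv₀ : v₀ = fun i => if i = Sum.inl () then Real.sqrt δ else 0)
    (vk : (k : Fin K) → Unit ⊕ ((k : Fin K) × Fin (G k)) → ℝ)
    (hvk : ∀ k : Fin K, vk k = fun i =>
      match i with
      | Sum.inl _ => 0
      | Sum.inr ⟨l, g⟩ => if l = k then Real.sqrt (T l + ng l g) else 0) :
    (∀ k : Fin K, v₀ ⬝ᵥ Qbar *ᵥ vk k = ∑ g, ng k g) ∧
      Real.sqrt (v₀ ⬝ᵥ v₀) = Real.sqrt δ ∧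
      (∀ k : Fin K, Real.sqrt (vk k ⬝ᵥ vk k) = Real.sqrt ((G k : ℝ) * T k + ∑ g, ng k g)) ∧
      (∀ k : Fin K, sInf (spectrum ℝ Qbar) ≤ 1 - Real.sqrt (δ / ((G k : ℝ) * T k + δ))) := by
  have hpos (k g) : 0 < T k + ng k g := add_pos_of_pos_of_nonneg (hT k) (hng k g)
  have hblock (k) : ∑ g, (T k + ng k g) = (G k : ℝ) * T k + δ := by
    simp [Finset.sum_add_distrib, hsumg k]
  have hv₀' : v₀ = Pi.single (.inl ()) √δ := by
    rw [hv₀]; ext i; simp [Pi.single_apply]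
  have he₀ : dv * v₀ = Pi.single (.inl ()) 1 := by
    rw [hv₀']; ext (_ | _) <;> simp [hdv0, (Real.sqrt_pos.2 hδ).ne']
  have hbk (k) : dv * vk k = blockIndicator k := by
    ext (_ | ⟨l, g⟩)
    · simp [hvk, blockIndicator]
    · simp [hvk, blockIndicator, hdv, (Real.sqrt_pos.2 (hpos l g)).ne']
  have hform (x y) : x ⬝ᵥ Qbar *ᵥ y = (dv * x) ⬝ᵥ Q *ᵥ (dv * y) := by
    rw [hQbar, dotProduct_diagonal_mul_mul_diagonal_mulVec]
  have h00 : v₀ ⬝ᵥ Qbar *ᵥ v₀ = δ := by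
    simp [hform, he₀, hQ00]
  have h0k (k) : v₀ ⬝ᵥ Qbar *ᵥ vk k = δ := by
    rw [hform, he₀, hbk, single_one_dotProduct]
    simp only [mulVec, dotProduct_blockIndicator, hQ0, hsumg]
  have hkk (k) : vk k ⬝ᵥ Qbar *ᵥ vk k = (G k : ℝ) * T k + δ := by
    rw [hform, hbk, dotProduct_comm, dotProduct_blockIndicator]
    simp only [mulVec, dotProduct_blockIndicator, hQdiag, Finset.sum_ite_eq, Finset.mem_univ,
      if_true, hblock]
  have hn0 : v₀ ⬝ᵥ v₀ = δ := by
    simp [hv₀', hδ.le]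
  have hnk (k) : vk k ⬝ᵥ vk k = (G k : ℝ) * T k + δ := by
    rw [dotProduct, sum_eq_sum_block_of_vanishing _ k (by simp [hvk])
      (fun l hl g => by simp [hvk, hl])]
    simp [hvk, Real.mul_self_sqrt (hpos k _).le, hblock]
  have horth (k) : v₀ ⬝ᵥ vk k = 0 := by
    simp [hv₀', hvk]
  have hQbar_herm : Qbar.IsHermitian := by
    simpa [hQbar] using
      isHermitian_conjTranspose_mul_mul (diagonal dv) (isHermitian_iff_isSymm.mpr hsym)
  refine ⟨fun k => by rw [h0k, hsumg], by rw [hn0], fun k => by rw [hnk, hsumg], fun k => ?_⟩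
  have hS : 0 < (G k : ℝ) * T k + δ := by have := hT k; positivity
  convert hQbar_herm.sInf_spectrum_le_one_sub_div hδ hS hn0 h00 (hnk k) (hkk k) (horth k) (h0k k)
    using 2
  rw [Real.sqrt_div hδ.le, div_mul_eq_div_div, Real.div_sqrt]
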